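/- arXiv:1306.6822 — 5 statements merged into one kernel-verified Lean document; each statement's English description precedes it below -/
import Mathlib

section
/- The set G of homeomorphisms f of ℝ such that f − id and f⁻¹ − id belong to W^{1,∞}(ℝ) and f_ξ − 1 belongs to L²(ℝ) is a group under composition. -/
open MeasureTheory

/-- Membership in the relabeling group `G`: `f - id` and `f⁻¹ - id` belong to
`W^{1,∞}` (bounded and Lipschitz, hence with bounded weak derivative), and
`f_ξ - 1 ∈ L²`. -/
def InRelabelingGroup (f : Homeomorph ℝ ℝ) : Prop :=
  (∃ C : ℝ, ∀ x, |f x - x| ≤ C) ∧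
  (∃ L : NNReal, LipschitzWith L (fun x => f x - x)) ∧
  (∃ C : ℝ, ∀ x, |f.symm x - x| ≤ C) ∧
  (∃ L : NNReal, LipschitzWith L (fun x => f.symm x - x)) ∧
  MemLp (fun x => deriv f x - 1) 2 (volume : Measure ℝ) ∧
  MemLp (fun x => deriv f.symm x - 1) 2 (volume : Measure ℝ)

/-! The inverse of `f ∈ G` satisfies the same conditions with the roles of `f` and `f⁻¹`
exchanged. For composition, `g ∘ f - id = (g - id) ∘ f + (f - id)` handles the `W^{1,∞}` part, and
almost everywhere (Rademacher) `(g ∘ f)' - 1 = (g' ∘ f - 1) f' + (f' - 1)`. Since `f'` is bounded,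
it remains to see that precomposition with `f` preserves `Lᵖ`: as `f⁻¹` is `K`-Lipschitz, the
push-forward of Lebesgue measure under `f` is at most `K` times Lebesgue measure. -/

open Filter
open scoped NNReal ENNReal

lemma LipschitzWith.volume_image_le {K : ℝ≥0} {φ : ℝ → ℝ} (hφ : LipschitzWith K φ) (s : Set ℝ) :
    volume (φ '' s) ≤ K * volume s := by
  simpa [hausdorffMeasure_real] using hφ.hausdorffMeasure_image_le zero_le_one s

lemma LipschitzWith.of_sub_id {f : ℝ → ℝ} {L : ℝ≥0} (h : LipschitzWith L fun x => f x - x) :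
    LipschitzWith (L + 1) f := by
  simpa using h.add LipschitzWith.id

namespace Homeomorph

variable {f : ℝ ≃ₜ ℝ} {K : ℝ≥0}

lemma map_volume_le_smul_of_lipschitzWith_symm (h : LipschitzWith K f.symm) :
    volume.map f ≤ (K : ℝ≥0∞) • volume := by
  refine Measure.le_iff.2 fun s hs => ?_
  rw [Measure.map_apply f.continuous.measurable hs, ← f.image_symm, Measure.smul_apply,
    smul_eq_mul]
  exact h.volume_image_le s

lemma quasiMeasurePreserving_of_lipschitzWith_symm (h : LipschitzWith K f.symm) :
    Measure.QuasiMeasurePreserving f volume volume :=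
  ⟨f.continuous.measurable,
    Measure.absolutelyContinuous_of_le_smul (map_volume_le_smul_of_lipschitzWith_symm h)⟩

end Homeomorph

lemma MeasureTheory.MemLp.comp_homeomorph {E : Type*} [NormedAddCommGroup E] {p : ℝ≥0∞}
    {u : ℝ → E} (hu : MemLp u p volume) {f : ℝ ≃ₜ ℝ} {K : ℝ≥0} (h : LipschitzWith K f.symm) :
    MemLp (u ∘ f) p volume :=
  (hu.of_measure_le_smul ENNReal.coe_ne_top
    (f.map_volume_le_smul_of_lipschitzWith_symm h)).comp_of_map f.continuous.aemeasurable

lemma abs_comp_sub_le_add {f g : ℝ → ℝ} {Cf Cg : ℝ} (hf : ∀ x, |f x - x| ≤ Cf)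
    (hg : ∀ x, |g x - x| ≤ Cg) (x : ℝ) : |g (f x) - x| ≤ Cg + Cf :=
  calc |g (f x) - x| = |(g (f x) - f x) + (f x - x)| := by ring_nf
    _ ≤ Cg + Cf := (abs_add_le _ _).trans (add_le_add (hg _) (hf x))

lemma LipschitzWith.comp_sub_id {f g : ℝ → ℝ} {Lf Lg : ℝ≥0}
    (hf : LipschitzWith Lf fun x => f x - x) (hg : LipschitzWith Lg fun x => g x - x) :
    LipschitzWith (Lg * (Lf + 1) + Lf) fun x => g (f x) - x := by
  simpa using (hg.comp hf.of_sub_id).add hf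

lemma memLp_deriv_comp_sub_one {p : ℝ≥0∞} {f : ℝ ≃ₜ ℝ} {g : ℝ → ℝ} {Kf Ks Kg : ℝ≥0}
    (hf : LipschitzWith Kf f) (hfs : LipschitzWith Ks f.symm) (hg : LipschitzWith Kg g)
    (hf' : MemLp (fun x => deriv f x - 1) p volume)
    (hg' : MemLp (fun x => deriv g x - 1) p volume) :
    MemLp (fun x => deriv (g ∘ f) x - 1) p volume := by
  have hgf' : MemLp (fun x => deriv g (f x) - 1) p volume := hg'.comp_homeomorph hfs
  have hgf_diff : ∀ᵐ x, DifferentiableAt ℝ g (f x) :=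
    (f.quasiMeasurePreserving_of_lipschitzWith_symm hfs).ae hg.ae_differentiableAt
  have chain : ∀ᵐ x, (deriv g (f x) - 1) * deriv f x + (deriv f x - 1) = deriv (g ∘ f) x - 1 := by
    filter_upwards [hf.ae_differentiableAt, hgf_diff] with x hfx hgx
    rw [deriv_comp x hgx hfx]
    ring
  have hprod : MemLp (fun x => (deriv g (f x) - 1) * deriv f x) p volume := by
    refine hgf'.of_le_mul (c := Kf) (hgf'.1.mul (measurable_deriv f).aestronglyMeasurable)
      (Eventually.of_forall fun x => ?_)
    rw [norm_mul, mul_comm]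
    exact mul_le_mul_of_nonneg_right (norm_deriv_le_of_lipschitz (𝕜 := ℝ) hf) (norm_nonneg _)
  exact (hprod.add hf').ae_eq chain

theorem InRelabelingGroup.refl : InRelabelingGroup (Homeomorph.refl ℝ) :=
  ⟨⟨0, by simp⟩, ⟨0, by simp⟩, ⟨0, by simp⟩, ⟨0, by simp⟩, by simp, by simp⟩

theorem InRelabelingGroup.symm {f : ℝ ≃ₜ ℝ} (hf : InRelabelingGroup f) :
    InRelabelingGroup f.symm :=
  let ⟨h1, h2, h3, h4, h5, h6⟩ := hf
  ⟨h3, h4, h1, h2, h6, h5⟩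

theorem InRelabelingGroup.trans {f g : ℝ ≃ₜ ℝ} (hf : InRelabelingGroup f)
    (hg : InRelabelingGroup g) : InRelabelingGroup (f.trans g) := by
  obtain ⟨⟨_, hfC⟩, ⟨_, hfL⟩, ⟨_, hfsC⟩, ⟨_, hfsL⟩, hf', hfs'⟩ := hf
  obtain ⟨⟨_, hgC⟩, ⟨_, hgL⟩, ⟨_, hgsC⟩, ⟨_, hgsL⟩, hg', hgs'⟩ := hg
  exact ⟨⟨_, (abs_comp_sub_le_add hfC hgC :)⟩, ⟨_, hfL.comp_sub_id hgL⟩,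
    ⟨_, (abs_comp_sub_le_add hgsC hfsC :)⟩, ⟨_, hgsL.comp_sub_id hfsL⟩,
    memLp_deriv_comp_sub_one hfL.of_sub_id hfsL.of_sub_id hgL.of_sub_id hf' hg',
    memLp_deriv_comp_sub_one hgsL.of_sub_id hgL.of_sub_id hfsL.of_sub_id hgs' hfs'⟩

/-- The set `G` of such homeomorphisms is a group under composition: it contains
the identity and is closed under composition and inversion. -/
theorem relabelingGroup_is_group :
    InRelabelingGroup (Homeomorph.refl ℝ) ∧
    (∀ f g : Homeomorph ℝ ℝ, InRelabelingGroup f → InRelabelingGroup g →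
      InRelabelingGroup (f.trans g)) ∧
    (∀ f : Homeomorph ℝ ℝ, InRelabelingGroup f → InRelabelingGroup f.symm) :=
  ⟨.refl, fun _ _ hf hg => hf.trans hg, fun _ hf => hf.symm⟩
end

section
/- Suppose (y, U, H, r) satisfies y nondecreasing, U Lipschitz, and the identity y_ξ H_ξ = y_ξ² U² + U_ξ² + r² almost everywhere. If ξ₁ < ξ₂ and y(ξ₁) = y(ξ₂), then U(ξ₁) = U(ξ₂). -/
/-! Since `y` is nondecreasing with `y ξ₁ = y ξ₂`, it is constant on `[ξ₁, ξ₂]`, so `y_ξ = 0` there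
and the energy identity collapses to `0 = U_ξ² + r²`, giving `U_ξ = 0` a.e. on the interval.
A Lipschitz function is absolutely continuous, so `U` is the integral of `U_ξ` and hence constant. -/

open MeasureTheory Set

theorem MonotoneOn.deriv_eq_zero_of_eq {f : ℝ → ℝ} {a b x : ℝ} (hf : MonotoneOn f (Icc a b))
    (hab : f a = f b) (hx : x ∈ Ioo a b) : deriv f x = 0 := by
  have hconst : f =ᶠ[nhds x] fun _ => f a := by
    filter_upwards [isOpen_Ioo.mem_nhds hx] with z hz
    have hz' := Ioo_subset_Icc_self hz
    have ha : a ∈ Icc a b := left_mem_Icc.2 (hx.1.trans hx.2).le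
    have hb : b ∈ Icc a b := right_mem_Icc.2 (hx.1.trans hx.2).le
    exact le_antisymm (hab ▸ hf hz' hb hz'.2) (hf ha hz' hz'.1)
  rw [hconst.deriv_eq, deriv_const]

theorem AbsolutelyContinuousOnInterval.eq_of_ae_deriv_eq_zero {f : ℝ → ℝ} {a b : ℝ}
    (hf : AbsolutelyContinuousOnInterval f a b) (hab : a ≤ b)
    (hf' : ∀ᵐ x, x ∈ Ioo a b → deriv f x = 0) : f a = f b := by
  have hint : ∫ x in a..b, deriv f x = 0 := by
    rw [intervalIntegral.integral_of_le hab, integral_Ioc_eq_integral_Ioo]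
    exact setIntegral_eq_zero_of_ae_eq_zero hf'
  rw [hf.integral_deriv_eq_sub] at hint
  linarith

theorem eulerian_velocity_well_defined_general
    (y U H r : ℝ → ℝ)
    (LU : NNReal)
    (hUlip : LipschitzWith LU U)
    (hymono : Monotone y)
    (henergy : ∀ᵐ ξ : ℝ,
      deriv y ξ * deriv H ξ =
        (deriv y ξ)^2 * (U ξ)^2 + (deriv U ξ)^2 + (r ξ)^2)
    (ξ₁ ξ₂ : ℝ) (hlt : ξ₁ < ξ₂) (hyeq : y ξ₁ = y ξ₂) :
    U ξ₁ = U ξ₂ := by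
  have hUac : AbsolutelyContinuousOnInterval U ξ₁ ξ₂ :=
    (hUlip.lipschitzOnWith (s := uIcc ξ₁ ξ₂)).absolutelyContinuousOnInterval
  refine hUac.eq_of_ae_deriv_eq_zero hlt.le ?_
  filter_upwards [henergy] with ξ hξ hmem
  have hy' : deriv y ξ = 0 := (hymono.monotoneOn _).deriv_eq_zero_of_eq hyeq hmem
  rw [hy'] at hξ
  have hsq : deriv U ξ ^ 2 = 0 := by nlinarith [sq_nonneg (r ξ)]
  exact pow_eq_zero_iff two_ne_zero |>.1 hsq

/-- If `y` is nondecreasing and the Lagrangian energy identity holds, then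
`y(ξ₁) = y(ξ₂)` with `ξ₁ < ξ₂` forces `U(ξ₁) = U(ξ₂)`: the Eulerian velocity
is well defined. -/
theorem eulerian_velocity_well_defined
    (y U H r : ℝ → ℝ)
    (Ly LU LH : NNReal)
    (hylip : LipschitzWith Ly y)
    (hUlip : LipschitzWith LU U) (hHlip : LipschitzWith LH H)
    (hrmeas : Measurable r)
    (hymono : Monotone y)
    (henergy : ∀ᵐ ξ : ℝ,
      deriv y ξ * deriv H ξ =
        (deriv y ξ)^2 * (U ξ)^2 + (deriv U ξ)^2 + (r ξ)^2)
    (ξ₁ ξ₂ : ℝ) (hlt : ξ₁ < ξ₂) (hyeq : y ξ₁ = y ξ₂) :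
    U ξ₁ = U ξ₂ :=
  eulerian_velocity_well_defined_general y U H r LU hUlip hymono henergy ξ₁ ξ₂ hlt hyeq
end

section
/- Let X_α, X_β be tuples of Lipschitz functions (y, U, H) with y + H = id, 0 ≤ y_ξ ≤ 1, 0 ≤ H_ξ ≤ 1, |U_ξ| ≤ 1 a.e. (so each component of X_α has a.e. derivative bounded by 1, giving ‖X_{α,ξ}‖_{L^∞} ≤ 3). Then for any homeomorphism f of ℝ, ‖X_α − X_β‖_{L^∞} ≤ 4‖X_α∘f − X_β‖_{L^∞}, where ‖X‖_{L^∞} = ‖y − id‖_{L^∞} + ‖U‖_{L^∞} + ‖H‖_{L^∞}. -/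
/-! Since `y + H = id`, the displacement `‖f - id‖_∞` is at most the `y`- and `H`-parts of
`‖X_α∘f - X_β‖_∞`. Each component `g` of `X_α` is `1`-Lipschitz, so `‖g - g∘f‖_∞ ≤ ‖f - id‖_∞`,
and the triangle inequality through `g∘f` gives `‖g - g_β‖_∞ ≤ ‖f - id‖_∞ + ‖g∘f - g_β‖_∞`.
Summing over the three components yields the factor `4`. -/

open scoped ENNReal NNReal

theorem iSup_edist_le_of_lipschitzWith {α E : Type*} [PseudoEMetricSpace α]
    [PseudoEMetricSpace E] {K : ℝ≥0} {g : α → E} (hg : LipschitzWith K g) (h : α → E)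
    (f : α → α) :
    ⨆ x, edist (g x) (h x) ≤ K * (⨆ x, edist x (f x)) + ⨆ x, edist (g (f x)) (h x) :=
  iSup_le fun x => calc
    edist (g x) (h x) ≤ edist (g x) (g (f x)) + edist (g (f x)) (h x) := edist_triangle _ _ _
    _ ≤ K * edist x (f x) + edist (g (f x)) (h x) := by grw [hg.edist_le_mul]
    _ ≤ K * (⨆ x, edist x (f x)) + ⨆ x, edist (g (f x)) (h x) := by
      gcongr
      · exact le_iSup (fun x => edist x (f x)) x
      · exact le_iSup (fun x => edist (g (f x)) (h x)) x

theorem iSup_edist_self_le_of_add_eq_id {E : Type*} [SeminormedAddCommGroup E]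
    {yα Hα yβ Hβ : E → E} (hα : ∀ x, yα x + Hα x = x) (hβ : ∀ x, yβ x + Hβ x = x)
    (f : E → E) :
    ⨆ x, edist x (f x) ≤
      (⨆ x, edist (yα (f x)) (yβ x)) + ⨆ x, edist (Hα (f x)) (Hβ x) :=
  iSup_le fun x => calc
    edist x (f x) = edist (yα (f x) + Hα (f x)) (yβ x + Hβ x) := by
      rw [hα, hβ, edist_comm]
    _ ≤ edist (yα (f x)) (yβ x) + edist (Hα (f x)) (Hβ x) := edist_add_add_le _ _ _ _
    _ ≤ (⨆ x, edist (yα (f x)) (yβ x)) + ⨆ x, edist (Hα (f x)) (Hβ x) := by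
      gcongr
      · exact le_iSup (fun x => edist (yα (f x)) (yβ x)) x
      · exact le_iSup (fun x => edist (Hα (f x)) (Hβ x)) x

theorem Linf_compare_relabeled_general
    (yα Uα Hα yβ Uβ Hβ : ℝ → ℝ)
    (hyαlip : LipschitzWith 1 yα) (hUαlip : LipschitzWith 1 Uα)
    (hHαlip : LipschitzWith 1 Hα)
    (hα : ∀ ξ, yα ξ + Hα ξ = ξ)
    (hβ : ∀ ξ, yβ ξ + Hβ ξ = ξ)
    (f : Homeomorph ℝ ℝ) :
    (⨆ ξ : ℝ, (‖yα ξ - yβ ξ‖₊ : ℝ≥0∞)) +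
        (⨆ ξ : ℝ, (‖Uα ξ - Uβ ξ‖₊ : ℝ≥0∞)) +
        (⨆ ξ : ℝ, (‖Hα ξ - Hβ ξ‖₊ : ℝ≥0∞)) ≤
      4 * ((⨆ ξ : ℝ, (‖yα (f ξ) - yβ ξ‖₊ : ℝ≥0∞)) +
        (⨆ ξ : ℝ, (‖Uα (f ξ) - Uβ ξ‖₊ : ℝ≥0∞)) +
        (⨆ ξ : ℝ, (‖Hα (f ξ) - Hβ ξ‖₊ : ℝ≥0∞))) := by
  simp only [← enorm_eq_nnnorm, ← edist_eq_enorm_sub]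
  have hdisplacement := iSup_edist_self_le_of_add_eq_id hα hβ f
  have hy := iSup_edist_le_of_lipschitzWith hyαlip yβ f
  have hU := iSup_edist_le_of_lipschitzWith hUαlip Uβ f
  have hH := iSup_edist_le_of_lipschitzWith hHαlip Hβ f
  rw [ENNReal.coe_one, one_mul] at hy hU hH
  set Sy := ⨆ ξ, edist (yα (f ξ)) (yβ ξ)
  set SU := ⨆ ξ, edist (Uα (f ξ)) (Uβ ξ)
  set SH := ⨆ ξ, edist (Hα (f ξ)) (Hβ ξ)
  calc _ ≤ (Sy + SH + Sy) + (Sy + SH + SU) + (Sy + SH + SH) := by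
        grw [hy, hU, hH, hdisplacement]
    _ = 4 * (Sy + SH) + SU := by ring
    _ ≤ 4 * (Sy + SH) + 4 * SU := by gcongr; exact le_mul_of_one_le_left' (by norm_num)
    _ = 4 * (Sy + SU + SH) := by ring

/-- If `X_α`, `X_β` are tuples of `1`-Lipschitz functions `(y,U,H)` with
`y + H = id`, then for any homeomorphism `f` of `ℝ`,
`‖X_α - X_β‖_{L^∞} ≤ 4 ‖X_α∘f - X_β‖_{L^∞}`, where
`‖X‖_{L^∞} = ‖y - id‖_∞ + ‖U‖_∞ + ‖H‖_∞`. -/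
theorem Linf_compare_relabeled
    (yα Uα Hα yβ Uβ Hβ : ℝ → ℝ)
    (hyαlip : LipschitzWith 1 yα) (hUαlip : LipschitzWith 1 Uα)
    (hHαlip : LipschitzWith 1 Hα)
    (hyβlip : LipschitzWith 1 yβ) (hUβlip : LipschitzWith 1 Uβ)
    (hHβlip : LipschitzWith 1 Hβ)
    (hα : ∀ ξ, yα ξ + Hα ξ = ξ)
    (hβ : ∀ ξ, yβ ξ + Hβ ξ = ξ)
    (f : Homeomorph ℝ ℝ) :
    (⨆ ξ : ℝ, (‖yα ξ - yβ ξ‖₊ : ℝ≥0∞)) +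
        (⨆ ξ : ℝ, (‖Uα ξ - Uβ ξ‖₊ : ℝ≥0∞)) +
        (⨆ ξ : ℝ, (‖Hα ξ - Hβ ξ‖₊ : ℝ≥0∞)) ≤
      4 * ((⨆ ξ : ℝ, (‖yα (f ξ) - yβ ξ‖₊ : ℝ≥0∞)) +
        (⨆ ξ : ℝ, (‖Uα (f ξ) - Uβ ξ‖₊ : ℝ≥0∞)) +
        (⨆ ξ : ℝ, (‖Hα (f ξ) - Hβ ξ‖₊ : ℝ≥0∞))) :=
  Linf_compare_relabeled_general yα Uα Hα yβ Uβ Hβ hyαlip hUαlip hHαlip hα hβ f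
end

section
/- Let f be an increasing homeomorphism of ℝ with ‖f − id‖_{L^∞} ≤ 1, and let r ∈ L²(ℝ). Then ‖∫_{−∞}^ξ (r∘f)(η) f_ξ(η) (e^{−|f(η)|} − e^{−|η|}) dη‖_{L^∞(dξ)} ≤ e·√2·‖r‖_{L²}·‖f − id‖_{L^∞}. -/
/-!
Since `||f η| - |η|| ≤ C ≤ 1`, the elementary bound `|e^t - 1| ≤ 2|t| ≤ e|t|` for `|t| ≤ 1` gives
`|e^{-|f η|} - e^{-|η|}| ≤ e C e^{-|f η|}`, so the integrand is dominated by
`e C f'(η) w(f η)` with `w = |r| e^{-|·|}`. Changing variables through the increasing map `f`,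
which is differentiable almost everywhere, the integral of `f' · (w ∘ f)` is at most `∫ w`,
and Cauchy–Schwarz bounds `∫ w` by `‖r‖₂ ‖e^{-|·|}‖₂ = ‖r‖₂ ≤ √2 ‖r‖₂`.
-/

open MeasureTheory Real Set

lemma abs_exp_neg_sub_exp_neg_le {a b C : ℝ} (hab : |a - b| ≤ C) (hC : C ≤ 1) :
    |exp (-a) - exp (-b)| ≤ exp 1 * C * exp (-a) := by
  have hexp : exp (-a) - exp (-b) = -(exp (-a) * (exp (a - b) - 1)) := by
    rw [mul_sub, ← exp_add]; ring_nf
  have htwo : (2 : ℝ) ≤ exp 1 := by linarith [add_one_le_exp (1 : ℝ)]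
  calc |exp (-a) - exp (-b)| = exp (-a) * |exp (a - b) - 1| := by
        rw [hexp, abs_neg, abs_mul, abs_of_pos (exp_pos _)]
    _ ≤ exp (-a) * (2 * |a - b|) := by gcongr; exact abs_exp_sub_one_le (hab.trans hC)
    _ ≤ exp (-a) * (exp 1 * C) := by gcongr
    _ = exp 1 * C * exp (-a) := by ring

lemma integral_exp_neg_mul_abs {a : ℝ} (ha : 0 < a) : ∫ x : ℝ, exp (-a * |x|) = 2 / a := by
  rw [integral_comp_abs (f := fun x => exp (-a * x)), integral_exp_mul_Ioi (by linarith)]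
  field_simp
  simp

lemma integrable_exp_neg_mul_abs {a : ℝ} (ha : 0 < a) :
    Integrable fun x : ℝ => exp (-a * |x|) :=
  Integrable.of_integral_ne_zero (by rw [integral_exp_neg_mul_abs ha]; positivity)

lemma exp_neg_abs_sq (x : ℝ) : exp (-|x|) ^ 2 = exp (-2 * |x|) := by
  rw [sq, ← exp_add]; ring_nf

lemma memLp_two_exp_neg_abs : MemLp (fun x : ℝ => exp (-|x|)) 2 := by
  rw [memLp_two_iff_integrable_sq (by fun_prop)]
  simpa only [exp_neg_abs_sq] using integrable_exp_neg_mul_abs two_pos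

lemma integrable_abs_mul_exp_neg_abs {r : ℝ → ℝ} (hr : MemLp r 2) :
    Integrable fun x => |r x| * exp (-|x|) :=
  hr.abs.integrable_mul memLp_two_exp_neg_abs

lemma integral_abs_mul_exp_neg_abs_le {r : ℝ → ℝ} (hr : MemLp r 2) :
    ∫ x, |r x| * exp (-|x|) ≤ (eLpNorm r 2 volume).toReal := by
  have hpq : HolderConjugate 2 2 := holderConjugate_iff.mpr ⟨one_lt_two, by norm_num⟩
  have hholder := integral_mul_norm_le_Lp_mul_Lq hpq (by simpa using hr)
    (by simpa using memLp_two_exp_neg_abs)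
  have hr_norm : (∫ x, ‖r x‖ ^ (2 : ℝ)) ^ (1 / (2 : ℝ)) = (eLpNorm r 2 volume).toReal := by
    rw [hr.eLpNorm_eq_integral_rpow_norm two_ne_zero ENNReal.ofNat_ne_top, ENNReal.toReal_ofNat,
      ENNReal.toReal_ofReal (by positivity), one_div]
  have hw_norm : ∫ x : ℝ, ‖exp (-|x|)‖ ^ (2 : ℝ) = 1 := by
    simp only [norm_of_nonneg (exp_pos _).le, rpow_two, exp_neg_abs_sq]
    rw [integral_exp_neg_mul_abs two_pos, div_self two_ne_zero]
  rw [hr_norm, hw_norm, one_rpow, mul_one] at hholder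
  simpa only [norm_of_nonneg (exp_pos _).le, Real.norm_eq_abs] using hholder

lemma Monotone.restrict_differentiableAt {f : ℝ → ℝ} (hf : Monotone f) :
    volume.restrict {x | DifferentiableAt ℝ f x} = volume :=
  Measure.restrict_eq_self_of_ae_mem hf.ae_differentiableAt

section ChangeOfVariables

variable {f : ℝ → ℝ} (hf : StrictMono f) {g : ℝ → ℝ}
include hf

lemma StrictMono.integrable_abs_deriv_mul_comp (hg : Integrable g) :
    Integrable fun x => |deriv f x| * g (f x) := by
  have hD := (integrableOn_image_iff_integrableOn_abs_deriv_smul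
    (measurableSet_of_differentiableAt ℝ f) (fun x hx => hx.hasDerivAt.hasDerivWithinAt)
    hf.injective.injOn g).1 hg.integrableOn
  rwa [IntegrableOn, hf.monotone.restrict_differentiableAt] at hD

lemma StrictMono.integral_abs_deriv_mul_comp_le (hg : Integrable g) (hg0 : 0 ≤ g) :
    ∫ x, |deriv f x| * g (f x) ≤ ∫ y, g y :=
  calc ∫ x, |deriv f x| * g (f x)
      = ∫ x in {x | DifferentiableAt ℝ f x}, |deriv f x| • g (f x) := by
        rw [hf.monotone.restrict_differentiableAt]; rfl
    _ = ∫ y in f '' {x | DifferentiableAt ℝ f x}, g y :=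
        (integral_image_eq_integral_abs_deriv_smul (measurableSet_of_differentiableAt ℝ f)
          (fun x hx => hx.hasDerivAt.hasDerivWithinAt) hf.injective.injOn g).symm
    _ ≤ ∫ y, g y := setIntegral_le_integral hg (ae_of_all _ hg0)

end ChangeOfVariables

theorem exp_relabeling_estimate_general
    (f : Homeomorph ℝ ℝ) (hmono : StrictMono f)
    (C : ℝ) (hC : ∀ x, |f x - x| ≤ C) (hC1 : C ≤ 1)
    (r : ℝ → ℝ) (hr : MemLp r 2 (volume : Measure ℝ)) :
    ∀ ξ : ℝ,
      |∫ η in Set.Iio ξ,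
          r (f η) * deriv f η * (Real.exp (-|f η|) - Real.exp (-|η|))| ≤
        Real.exp 1 * Real.sqrt 2 * (eLpNorm r 2 (volume : Measure ℝ)).toReal * C := by
  intro ξ
  set w : ℝ → ℝ := fun y => |r y| * exp (-|y|)
  have hw : Integrable w := integrable_abs_mul_exp_neg_abs hr
  have hw0 : 0 ≤ w := fun y => by positivity
  have hC0 : 0 ≤ C := (abs_nonneg _).trans (hC 0)
  have hdom : ∀ η, ‖r (f η) * deriv f η * (exp (-|f η|) - exp (-|η|))‖ ≤
      exp 1 * C * (|deriv f η| * w (f η)) := fun η => by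
    have hexp := abs_exp_neg_sub_exp_neg_le ((abs_abs_sub_abs_le_abs_sub _ _).trans (hC η)) hC1
    rw [norm_eq_abs, abs_mul, abs_mul]
    calc |r (f η)| * |deriv f η| * |exp (-|f η|) - exp (-|η|)|
        ≤ |r (f η)| * |deriv f η| * (exp 1 * C * exp (-|f η|)) := by gcongr
      _ = exp 1 * C * (|deriv f η| * w (f η)) := by ring
  have hmajorant := (hmono.integrable_abs_deriv_mul_comp hw).const_mul (exp 1 * C)
  calc |∫ η in Iio ξ, r (f η) * deriv f η * (exp (-|f η|) - exp (-|η|))|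
      ≤ ∫ η in Iio ξ, exp 1 * C * (|deriv f η| * w (f η)) :=
        norm_integral_le_of_norm_le hmajorant.integrableOn (ae_of_all _ hdom)
    _ ≤ ∫ η, exp 1 * C * (|deriv f η| * w (f η)) :=
        setIntegral_le_integral hmajorant (ae_of_all _ fun η => by positivity)
    _ = exp 1 * C * ∫ η, |deriv f η| * w (f η) := integral_const_mul _ _
    _ ≤ exp 1 * C * ∫ y, w y :=
        mul_le_mul_of_nonneg_left (hmono.integral_abs_deriv_mul_comp_le hw hw0) (by positivity)
    _ ≤ exp 1 * C * (eLpNorm r 2 volume).toReal :=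
        mul_le_mul_of_nonneg_left (integral_abs_mul_exp_neg_abs_le hr) (by positivity)
    _ ≤ exp 1 * sqrt 2 * (eLpNorm r 2 volume).toReal * C := by
        have hsqrt : (1 : ℝ) ≤ sqrt 2 := one_le_sqrt.mpr one_le_two
        have hprod : 0 ≤ exp 1 * C * (eLpNorm r 2 volume).toReal := by positivity
        nlinarith

/-- For an increasing (bi-Lipschitz) homeomorphism `f` with `‖f - id‖_∞ ≤ 1`
and `r ∈ L²`, the quantity
`∫_{-∞}^ξ (r∘f) f_ξ (e^{-|f(η)|} - e^{-|η|}) dη` is bounded uniformly in `ξ`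
by `e·√2·‖r‖_{L²}·‖f - id‖_∞`. -/
theorem exp_relabeling_estimate
    (f : Homeomorph ℝ ℝ) (hmono : StrictMono f)
    (K : NNReal) (hlip : LipschitzWith K f) (hlipinv : LipschitzWith K f.symm)
    (C : ℝ) (hC : ∀ x, |f x - x| ≤ C) (hC1 : C ≤ 1)
    (r : ℝ → ℝ) (hr : MemLp r 2 (volume : Measure ℝ)) :
    ∀ ξ : ℝ,
      |∫ η in Set.Iio ξ,
          r (f η) * deriv f η * (Real.exp (-|f η|) - Real.exp (-|η|))| ≤
        Real.exp 1 * Real.sqrt 2 * (eLpNorm r 2 (volume : Measure ℝ)).toReal * C :=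
  exp_relabeling_estimate_general f hmono C hC hC1 r hr
end

section
/- Let μ be a finite positive Radon measure on ℝ and define y(ξ) = sup{x : μ((−∞,x)) + x < ξ} and H(ξ) = ξ − y(ξ). Then y is nondecreasing and Lipschitz with Lipschitz constant 1, H is nondecreasing with 0 ≤ H(ξ) ≤ μ(ℝ), lim_{ξ→−∞} H(ξ) = 0, and y + H = id. -/
open MeasureTheory Filter Set Topology

/-!
Only three properties of `F x = μ((-∞, x))` matter: it is nondecreasing, `0 ≤ F ≤ μ(ℝ)`, and
`F → 0` at `-∞`. Then `y` is the generalized inverse of `x ↦ F x + x`, which grows at least as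
fast as the identity, so moving `ξ₁` to `ξ₂ ≥ ξ₁` shifts the sublevel set `{F x + x < ξ}` right
by at most `ξ₂ - ξ₁`: this is the `1`-Lipschitz bound, equivalently monotonicity of `H = id - y`.
The bounds on `F` pin `y ξ` between `ξ - μ(ℝ)` and `ξ`, and since `y ξ + ε` lies outside the
sublevel set, `H ξ ≤ F (ξ + ε) + ε`, which tends to `ε` as `ξ → -∞`.
-/

noncomputable def genInv (F : ℝ → ℝ) (ξ : ℝ) : ℝ :=
  sSup {x | F x + x < ξ}

section GenInv

variable {F : ℝ → ℝ} {M ξ ξ₁ ξ₂ ε : ℝ}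

theorem nonempty_sublevel_add_id (hFM : ∀ x, F x ≤ M) (ξ : ℝ) :
    {x | F x + x < ξ}.Nonempty :=
  ⟨ξ - M - 1, show F (ξ - M - 1) + (ξ - M - 1) < ξ by linarith [hFM (ξ - M - 1)]⟩

theorem bddAbove_sublevel_add_id (hF0 : ∀ x, 0 ≤ F x) (ξ : ℝ) :
    BddAbove {x | F x + x < ξ} :=
  ⟨ξ, fun x (hx : F x + x < ξ) => by linarith [hF0 x]⟩

theorem le_genInv (hF0 : ∀ x, 0 ≤ F x) {x : ℝ} (hx : F x + x < ξ) : x ≤ genInv F ξ :=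
  le_csSup (bddAbove_sublevel_add_id hF0 ξ) hx

theorem genInv_le_self (hF0 : ∀ x, 0 ≤ F x) (hFM : ∀ x, F x ≤ M) : genInv F ξ ≤ ξ :=
  csSup_le (nonempty_sublevel_add_id hFM ξ) fun x (hx : F x + x < ξ) => by linarith [hF0 x]

theorem sub_le_genInv (hF0 : ∀ x, 0 ≤ F x) (hFM : ∀ x, F x ≤ M) : ξ - M ≤ genInv F ξ := by
  refine le_of_forall_lt fun c hc => ?_
  obtain ⟨z, hcz, hz⟩ := exists_between hc
  have hz_mem : F z + z < ξ := by linarith [hFM z]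
  exact hcz.trans_le (le_genInv hF0 hz_mem)

theorem genInv_mono (hF0 : ∀ x, 0 ≤ F x) (hFM : ∀ x, F x ≤ M) : Monotone (genInv F) :=
  fun _ _ h => csSup_le_csSup (bddAbove_sublevel_add_id hF0 _) (nonempty_sublevel_add_id hFM _)
    fun _ hx => lt_of_lt_of_le hx h

theorem genInv_le_genInv_add (hF : Monotone F) (hF0 : ∀ x, 0 ≤ F x) (hFM : ∀ x, F x ≤ M)
    (h : ξ₁ ≤ ξ₂) : genInv F ξ₂ ≤ genInv F ξ₁ + (ξ₂ - ξ₁) := by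
  refine csSup_le (nonempty_sublevel_add_id hFM ξ₂) fun x (hx : F x + x < ξ₂) => ?_
  have hshift : F (x - (ξ₂ - ξ₁)) + (x - (ξ₂ - ξ₁)) < ξ₁ := by
    linarith [hF (show x - (ξ₂ - ξ₁) ≤ x by linarith)]
  linarith [le_genInv hF0 hshift]

theorem lipschitzWith_one_genInv (hF : Monotone F) (hF0 : ∀ x, 0 ≤ F x) (hFM : ∀ x, F x ≤ M) :
    LipschitzWith 1 (genInv F) := by
  refine LipschitzWith.of_le_add fun a b => ?_
  rcases le_total a b with hab | hba
  · linarith [genInv_mono hF0 hFM hab, dist_nonneg (x := a) (y := b)]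
  · rw [Real.dist_eq, abs_of_nonneg (sub_nonneg.2 hba)]
    exact genInv_le_genInv_add hF hF0 hFM hba

theorem monotone_sub_genInv (hF : Monotone F) (hF0 : ∀ x, 0 ≤ F x) (hFM : ∀ x, F x ≤ M) :
    Monotone fun ξ => ξ - genInv F ξ :=
  fun _ _ h => by linarith [genInv_le_genInv_add hF hF0 hFM h]

theorem sub_genInv_le (hF0 : ∀ x, 0 ≤ F x) (hε : 0 < ε) :
    ξ - genInv F ξ ≤ F (genInv F ξ + ε) + ε := by
  have hnot : ¬ F (genInv F ξ + ε) + (genInv F ξ + ε) < ξ := fun hmem => by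
    linarith [le_genInv hF0 hmem]
  linarith [not_lt.1 hnot]

theorem tendsto_sub_genInv_atBot (hF : Monotone F) (hF0 : ∀ x, 0 ≤ F x) (hFM : ∀ x, F x ≤ M)
    (hlim : Tendsto F atBot (𝓝 0)) : Tendsto (fun ξ => ξ - genInv F ξ) atBot (𝓝 0) := by
  refine tendsto_order.2 ⟨fun a ha => ?_, fun a ha => ?_⟩
  · exact Eventually.of_forall fun ξ => ha.trans_le (sub_nonneg.2 (genInv_le_self hF0 hFM))
  · have hsmall : ∀ᶠ ξ in atBot, F (ξ + a / 2) < a / 2 :=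
      (tendsto_atBot_add_const_right _ _ tendsto_id).eventually
        ((tendsto_order.1 hlim).2 _ (half_pos ha))
    filter_upwards [hsmall] with ξ hξ
    calc ξ - genInv F ξ ≤ F (genInv F ξ + a / 2) + a / 2 := sub_genInv_le hF0 (half_pos ha)
      _ ≤ F (ξ + a / 2) + a / 2 := by
        have hle : genInv F ξ + a / 2 ≤ ξ + a / 2 := by linarith [genInv_le_self (ξ := ξ) hF0 hFM]
        linarith [hF hle]
      _ < a := by linarith

end GenInv

theorem tendsto_measure_Iio_atBot {α : Type*} [LinearOrder α] [TopologicalSpace α]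
    [OrderClosedTopology α] [MeasurableSpace α] [OpensMeasurableSpace α]
    [Nonempty α] [IsCountablyGenerated (atBot : Filter α)] (μ : Measure α) [IsFiniteMeasure μ] :
    Tendsto (fun x => μ (Iio x)) atBot (𝓝 0) := by
  have hempty : ⋂ x : α, Iio x = ∅ :=
    eq_empty_of_forall_notMem fun x hx => lt_irrefl x (mem_iInter.1 hx x)
  simpa [hempty, Function.comp_def] using tendsto_measure_iInter_atBot (μ := μ)
    (fun _ => measurableSet_Iio.nullMeasurableSet) (fun _ _ h => Iio_subset_Iio h)
    ⟨Classical.arbitrary α, measure_ne_top μ _⟩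

/-- For a finite positive Radon measure `μ` on `ℝ`, the generalized inverse
`y(ξ) = sup{x : μ((-∞,x)) + x < ξ}` is nondecreasing and `1`-Lipschitz, and
`H = id - y` is nondecreasing with `0 ≤ H ≤ μ(ℝ)`, `H → 0` at `-∞`, and
`y + H = id`. -/
theorem lagrangian_from_measure
    (μ : Measure ℝ) [IsFiniteMeasure μ]
    (y H : ℝ → ℝ)
    (hy : y = fun ξ => sSup {x : ℝ | (μ (Set.Iio x)).toReal + x < ξ})
    (hH : H = fun ξ => ξ - y ξ) :
    Monotone y ∧ LipschitzWith 1 y ∧ Monotone H ∧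
    (∀ ξ, 0 ≤ H ξ ∧ H ξ ≤ (μ Set.univ).toReal) ∧
    Tendsto H atBot (nhds 0) ∧
    ∀ ξ, y ξ + H ξ = ξ := by
  set F : ℝ → ℝ := fun x => μ.real (Iio x)
  have hF : Monotone F := fun _ _ h => measureReal_mono (Iio_subset_Iio h)
  have hF0 : ∀ x, 0 ≤ F x := fun _ => measureReal_nonneg
  have hFM : ∀ x, F x ≤ μ.real univ := fun _ => measureReal_mono (subset_univ _)
  have hlim : Tendsto F atBot (𝓝 0) :=
    (ENNReal.tendsto_toReal ENNReal.zero_ne_top).comp (tendsto_measure_Iio_atBot μ)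
  obtain rfl : y = genInv F := hy
  subst hH
  exact ⟨genInv_mono hF0 hFM, lipschitzWith_one_genInv hF hF0 hFM, monotone_sub_genInv hF hF0 hFM,
    fun ξ => ⟨sub_nonneg.2 (genInv_le_self hF0 hFM), sub_le_comm.1 (sub_le_genInv hF0 hFM)⟩,
    tendsto_sub_genInv_atBot hF hF0 hFM hlim, fun ξ => add_sub_cancel _ _⟩
end
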